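/- arXiv:2202.00704 — 2 statements merged into one kernel-verified Lean document; each statement's English description precedes it below -/
import Mathlib

section
/- Let p ≠ 2 be a prime such that α(p) is divisible by 4. Then F(n + α(p)) ≡ −F(n) (mod p) for all n ≥ 0. -/
open Nat

private lemma cassini (R : Type*) [CommRing R] :
    ∀ n : ℕ, (Nat.fib (n+1) : R)^2 - (Nat.fib (n+2) : R) * (Nat.fib n : R) = (-1)^n := by
  intro n
  induction n with
  | zero => simp
  | succ n ih =>
    have h1 : (Nat.fib (n+2) : R) = Nat.fib n + Nat.fib (n+1) := by
      rw [Nat.fib_add_two]; push_cast; ring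
    have h2 : (Nat.fib (n+3) : R) = Nat.fib (n+1) + Nat.fib (n+2) := by
      rw [show n+3 = (n+1)+2 from rfl, Nat.fib_add_two]; push_cast; ring
    have : (Nat.fib (n+2) : R)^2 - (Nat.fib (n+3) : R) * (Nat.fib (n+1) : R)
        = -((Nat.fib (n+1) : R)^2 - (Nat.fib (n+2) : R) * (Nat.fib n : R)) := by
      rw [h2, h1]; ring
    rw [show n+1+1 = n+2 from rfl, show n+1+2 = n+3 from rfl, this, ih]
    ring

private lemma back_step (p : ℕ) : ∀ a d : ℕ,
    (Nat.fib (a + d) : ZMod p) = Nat.fib a → (Nat.fib (a + d + 1) : ZMod p) = Nat.fib (a+1) →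
    (Nat.fib d : ZMod p) = 0 := by
  intro a
  induction a with
  | zero => intro d h _; simpa using h
  | succ a ih =>
    intro d h1 h2
    apply ih d
    · have e1 : (Nat.fib (a + d + 2) : ZMod p) = Nat.fib (a+d) + Nat.fib (a+d+1) := by
        rw [Nat.fib_add_two]; push_cast; ring
      have e2 : (Nat.fib (a + 2) : ZMod p) = Nat.fib a + Nat.fib (a+1) := by
        rw [Nat.fib_add_two]; push_cast; ring
      have h1' : (Nat.fib (a + d + 1) : ZMod p) = Nat.fib (a+1) := by
        rw [show a + d + 1 = (a+1) + d by ring] at *; exact h1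
      have h2' : (Nat.fib (a + d + 2) : ZMod p) = Nat.fib (a+2) := by
        rw [show a + d + 2 = (a+1) + d + 1 by ring]; exact h2
      have := h2'
      rw [e1, e2, h1'] at this
      exact add_right_cancel this
    · rw [show a + d + 1 = (a+1) + d by ring]; exact h1

private lemma exists_entry (p : ℕ) (hp : p.Prime) : ∃ m, 1 ≤ m ∧ p ∣ Nat.fib m := by
  haveI : Fact p.Prime := ⟨hp⟩
  obtain ⟨a, b, hne, hab⟩ := Finite.exists_ne_map_eq_of_infinite
    (fun n : ℕ => ((Nat.fib n : ZMod p), (Nat.fib (n+1) : ZMod p)))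
  rcases hne.lt_or_gt with h | h
  · refine ⟨b - a, by omega, ?_⟩
    rw [← ZMod.natCast_eq_zero_iff]
    apply back_step p a (b - a)
    · rw [show a + (b - a) = b by omega]
      exact (Prod.mk.injEq _ _ _ _ ▸ hab).1.symm
    · rw [show a + (b - a) + 1 = b + 1 by omega]
      exact (Prod.mk.injEq _ _ _ _ ▸ hab).2.symm
  · refine ⟨a - b, by omega, ?_⟩
    rw [← ZMod.natCast_eq_zero_iff]
    apply back_step p b (a - b)
    · rw [show b + (a - b) = a by omega]
      exact (Prod.mk.injEq _ _ _ _ ▸ hab).1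
    · rw [show b + (a - b) + 1 = a + 1 by omega]
      exact (Prod.mk.injEq _ _ _ _ ▸ hab).2

/-- The restricted period length `α(p)`: the least `m ≥ 1` with `F m ≡ 0 (mod p)`. -/
noncomputable def fibEntry (p : ℕ) : ℕ :=
  sInf {m | 1 ≤ m ∧ p ∣ Nat.fib m}

theorem fib_add_entry_eq_neg (p : ℕ) (hp : p.Prime) (hp2 : p ≠ 2)
    (h4 : 4 ∣ fibEntry p) :
    ∀ n : ℕ, (Nat.fib (n + fibEntry p) : ZMod p) = -(Nat.fib n : ZMod p) := by
  haveI : Fact p.Prime := ⟨hp⟩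
  set α := fibEntry p with hα
  have hmem : α ∈ {m | 1 ≤ m ∧ p ∣ Nat.fib m} := Nat.sInf_mem (exists_entry p hp)
  obtain ⟨hα1, hαdvd⟩ := hmem
  have hαz : (Nat.fib α : ZMod p) = 0 := (ZMod.natCast_eq_zero_iff _ _).mpr hαdvd
  -- k = α/2
  obtain ⟨j, hj⟩ := h4
  have hα4 : 4 ≤ α := by omega
  set k := 2 * j with hk
  have hαk : α = 2 * k := by omega
  have hkeven : Even k := ⟨j, by omega⟩
  have hklt : k < α := by omega
  have hk1 : 1 ≤ k := by omega
  -- p does not divide fib k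
  have hknd : ¬ p ∣ Nat.fib k := by
    intro hd
    have : α ≤ k := Nat.sInf_le ⟨hk1, hd⟩
    omega
  -- p ∣ 2 * fib (k+1) - fib k
  have hle : Nat.fib k ≤ 2 * Nat.fib (k+1) := by
    have := @Nat.fib_le_fib_succ k; omega
  have hdL : p ∣ 2 * Nat.fib (k+1) - Nat.fib k := by
    have h2m : p ∣ Nat.fib k * (2 * Nat.fib (k+1) - Nat.fib k) := by
      rw [← Nat.fib_two_mul, ← hαk]; exact hαdvd
    rcases (Nat.Prime.dvd_mul hp).mp h2m with h | h
    · exact absurd h hknd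
    · exact h
  have hL : (2 : ZMod p) * (Nat.fib (k+1) : ZMod p) = (Nat.fib k : ZMod p) := by
    have := (ZMod.natCast_eq_zero_iff _ _).mpr hdL
    rw [Nat.cast_sub hle] at this
    push_cast at this
    linear_combination this
  set e := (Nat.fib (k+1) : ZMod p) with he
  have hf : (Nat.fib k : ZMod p) = 2 * e := hL.symm
  -- Cassini at k
  have hcas : e^2 - (Nat.fib (k+2) : ZMod p) * (Nat.fib k : ZMod p) = 1 := by
    have := cassini (ZMod p) k
    rwa [hkeven.neg_one_pow] at this
  have hk2 : (Nat.fib (k+2) : ZMod p) = (Nat.fib k : ZMod p) + e := by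
    rw [Nat.fib_add_two]; push_cast; ring
  have h5e : -5 * e^2 = 1 := by
    rw [hk2, hf] at hcas; linear_combination hcas
  -- F(α+1) = -1
  have hc : (Nat.fib (α+1) : ZMod p) = -1 := by
    have : (Nat.fib (2*k+1) : ZMod p) = e^2 + (Nat.fib k : ZMod p)^2 := by
      rw [Nat.fib_two_mul_add_one]; push_cast; ring
    rw [← hαk] at this
    rw [this, hf]
    linear_combination -h5e
  -- final induction
  intro n
  induction n using Nat.twoStepInduction with
  | zero => simpa using hαz
  | one =>
    rw [show 1 + α = α + 1 by ring, hc]; simp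
  | more n ih1 ih2 =>
    have e1 : (Nat.fib (n + 2 + α) : ZMod p)
        = Nat.fib (n + α) + Nat.fib (n + 1 + α) := by
      rw [show n + 2 + α = (n + α) + 2 by ring, Nat.fib_add_two,
        show n + α + 1 = n + 1 + α by ring]
      push_cast; ring
    rw [e1, ih1, ih2, Nat.fib_add_two]
    push_cast; ring
end

section
/- Let p be a prime with p ≠ 2 and p ≠ 5, and let e = ν_p(F(p−ε)). If m ≡ n (mod π(p)), then F(m) ≡ F(n) (mod p^e). -/
/-- The Pisano period of the Fibonacci sequence modulo `p`: the least `m ≥ 1`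
with `F (n + m) ≡ F n (mod p)` for all `n`. -/
noncomputable def pisano (p : ℕ) : ℕ :=
  sInf {m | 1 ≤ m ∧ ∀ n, Nat.fib (n + m) ≡ Nat.fib n [MOD p]}

/-- The natural number `p - ε` for `p ∉ {2, 5}`. -/
def pSubEps (p : ℕ) : ℕ := if p % 5 = 1 ∨ p % 5 = 4 then p - 1 else p + 1

/-- The Wall exponent `e = ν_p (F (p - ε))`. -/
def wallExp (p : ℕ) : ℕ := padicValNat p (Nat.fib (pSubEps p))

/-!
Let `P = π(p)`, so that `F P ≡ 0` and `F (P + 1) ≡ 1` modulo `p`. Then `P` is a period of `F`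
modulo any `q` with `F P ≡ 0` and `F (P + 1) ≡ 1 (mod q)`, and both hold for `q = p ^ e`:

* Expanding `F (a t) ≡ t F(a) F(a - 1) ^ (t - 1) (mod F(a) ^ 2)` shows `ν_p (F (a t)) = ν_p (F a)`
  when `p ∣ F a` and `p ∤ t`. With `a = gcd (p - ε) P` this gives `p ^ e ∣ F a ∣ F P`.
* Cassini's identity turns `F P ≡ 0` into `F (P + 1) ^ 2 ≡ (-1) ^ P`. Modulo `p` this forces `P`
  to be even, so `F (P + 1) ^ 2 ≡ 1 (mod p ^ e)`; as `F (P + 1) + 1 ≡ 2` is a unit, `F (P + 1) ≡ 1`.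
-/

open Nat

section CommRing

variable {R : Type*} [CommRing R]

theorem fib_periodic_of_fib_eq_zero_of_fib_succ_eq_one {P : ℕ} (h0 : (fib P : R) = 0)
    (h1 : (fib (P + 1) : R) = 1) : Function.Periodic (fun n ↦ (fib n : R)) P := by
  intro n
  cases n with
  | zero => simpa using h0
  | succ n =>
    simp only [show n + 1 + P = n + P + 1 by omega, fib_add, Nat.cast_add, Nat.cast_mul, h0, h1]
    ring

theorem fib_succ_sq_of_fib_eq_zero {P : ℕ} (h0 : (fib P : R) = 0) :
    (fib (P + 1) : R) ^ 2 = (-1) ^ P := by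
  have hsucc : Int.fib (P + 1) = fib (P + 1) := by exact_mod_cast Int.fib_natCast (P + 1)
  have cassini := congrArg (Int.cast : ℤ → R) (Int.fib_succ_mul_fib_pred_sub_fib_sq P)
  have hpred := congrArg (Int.cast : ℤ → R) (Int.fib_add_one ((P : ℤ) - 1))
  rw [sub_add_cancel, show (P : ℤ) - 1 + 2 = P + 1 by ring] at hpred
  simp only [hsucc, Int.fib_natCast, Int.cast_natCast, Int.cast_sub, Int.cast_mul, Int.cast_pow,
    Int.cast_neg, Int.cast_one, Int.natAbs_natCast, h0] at cassini hpred
  linear_combination cassini - (fib (P + 1) : R) * hpred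

theorem even_of_fib_eq_zero_of_fib_succ_eq_one (hR : (-1 : R) ≠ 1) {P : ℕ}
    (h0 : (fib P : R) = 0) (h1 : (fib (P + 1) : R) = 1) : Even P := by
  rw [← neg_one_pow_eq_one_iff_even hR, ← fib_succ_sq_of_fib_eq_zero h0, h1, one_pow]

-- `F (a t)` and `F (a t + 1)` modulo `F a ^ 2`, written with `a = b + 1` and `t = s + 1`.
theorem fib_mul_of_fib_sq_eq_zero {b : ℕ} (hf : (fib (b + 1) : R) ^ 2 = 0) (s : ℕ) :
    (fib ((b + 1) * (s + 1)) : R) = (s + 1) * fib (b + 1) * fib b ^ s ∧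
      (fib ((b + 1) * (s + 1) + 1) : R) =
        fib b ^ (s + 1) + (s + 1) * fib (b + 1) * fib b ^ s := by
  induction s with
  | zero => simp [fib_add_two]
  | succ s ih =>
    obtain ⟨ih₀, ih₁⟩ := ih
    set N := (b + 1) * (s + 1)
    have hN : (b + 1) * (s + 1 + 1) = N + b + 1 := by simp only [N]; ring
    rw [hN, show N + b + 1 + 1 = N + (b + 1) + 1 by ring, fib_add, fib_add, fib_add_two]
    push_cast
    rw [ih₀, ih₁]
    constructor
    · linear_combination ((s : R) + 1) * (fib b : R) ^ s * hf
    · linear_combination (2 * (s : R) + 2) * (fib b : R) ^ s * hf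

end CommRing

theorem pow_dvd_fib_of_pow_dvd_fib_mul {p a t k : ℕ} (hp : p.Prime) (hpa : p ∣ fib a)
    (ht : ¬ p ∣ t) (h : p ^ k ∣ fib (a * t)) : p ^ k ∣ fib a := by
  induction k with
  | zero => simp
  | succ k ih =>
    -- once `p ^ k ∣ F a`, also `p ^ (k + 1) ∣ F a ^ 2`, where the expansion of `F (a t)` applies
    have hk := ih ((pow_dvd_pow p k.le_succ).trans h)
    obtain _ | b := a
    · simp
    obtain _ | s := t
    · simp at ht
    have hpb : ¬ p ∣ fib b := fun hb ↦
      hp.coprime_iff_not_dvd.mp ((fib_coprime_fib_succ b).coprime_dvd_left hb) hpa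
    have hsq : (fib (b + 1) : ZMod (p ^ (k + 1))) ^ 2 = 0 := by
      rw [← Nat.cast_pow, ZMod.natCast_eq_zero_iff, pow_succ, sq]
      exact mul_dvd_mul hk hpa
    have hexp := (fib_mul_of_fib_sq_eq_zero hsq s).1
    rw [(ZMod.natCast_eq_zero_iff _ _).mpr h] at hexp
    have hdvd : p ^ (k + 1) ∣ fib (b + 1) * ((s + 1) * fib b ^ s) := by
      rw [← ZMod.natCast_eq_zero_iff]
      push_cast
      linear_combination -hexp
    have hcop : Coprime (p ^ (k + 1)) ((s + 1) * fib b ^ s) :=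
      ((hp.coprime_iff_not_dvd.mpr ht).mul_right
        ((hp.coprime_iff_not_dvd.mpr hpb).pow_right s)).pow_left (k + 1)
    exact hcop.dvd_of_dvd_mul_right hdvd

theorem pow_dvd_fib_of_pow_dvd_fib {p q P k : ℕ} (hp : p.Prime) (hpq : ¬ p ∣ q)
    (hq : p ^ k ∣ fib q) (hP : p ∣ fib P) : p ^ k ∣ fib P := by
  rcases k.eq_zero_or_pos with rfl | hk
  · simp
  have hpg : p ∣ fib (Nat.gcd q P) := by
    rw [fib_gcd]
    exact Nat.dvd_gcd ((dvd_pow_self p hk.ne').trans hq) hP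
  obtain ⟨t, ht⟩ := Nat.gcd_dvd_left q P
  have hpt : ¬ p ∣ t := fun hpt ↦ hpq (ht ▸ dvd_mul_of_dvd_right hpt _)
  exact (pow_dvd_fib_of_pow_dvd_fib_mul hp hpg hpt (ht ▸ hq)).trans
    (fib_dvd _ _ (Nat.gcd_dvd_right q P))

theorem not_dvd_pSubEps {p : ℕ} (hp : p.Prime) : ¬ p ∣ pSubEps p := by
  unfold pSubEps
  split
  · exact Nat.not_dvd_of_pos_of_lt (Nat.sub_pos_of_lt hp.one_lt) (Nat.sub_lt hp.pos one_pos)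
  · exact fun h ↦ hp.one_lt.ne' (Nat.dvd_one.mp ((Nat.dvd_add_right dvd_rfl).mp h))

theorem natCast_eq_one_of_sq_eq_one {p k x : ℕ} (hp : p.Prime) (hp2 : p ≠ 2)
    (h1 : (x : ZMod p) = 1) (h2 : (x : ZMod (p ^ k)) ^ 2 = 1) : (x : ZMod (p ^ k)) = 1 := by
  have hunit : IsUnit ((x + 1 : ℕ) : ZMod (p ^ k)) := by
    rw [ZMod.isUnit_iff_coprime]
    refine Coprime.pow_right k ?_
    rw [Nat.coprime_comm, hp.coprime_iff_not_dvd, ← ZMod.natCast_eq_zero_iff]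
    intro h
    have h2p : ((2 : ℕ) : ZMod p) = 0 := by
      push_cast at h ⊢
      linear_combination h - h1
    rw [ZMod.natCast_eq_zero_iff] at h2p
    exact hp2 ((Nat.prime_dvd_prime_iff_eq hp Nat.prime_two).mp h2p)
  rw [← sub_eq_zero, ← hunit.mul_left_eq_zero]
  push_cast
  linear_combination h2

theorem fib_pisano_eq_zero_and_fib_succ_eq_one {p : ℕ} (hP : 0 < pisano p) :
    (fib (pisano p) : ZMod p) = 0 ∧ (fib (pisano p + 1) : ZMod p) = 1 := by
  unfold pisano at *
  obtain ⟨-, hper⟩ := Nat.sInf_mem (Nat.nonempty_of_pos_sInf hP)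
  constructor
  · simpa using (ZMod.natCast_eq_natCast_iff _ _ _).mpr (hper 0)
  · simpa [add_comm] using (ZMod.natCast_eq_natCast_iff _ _ _).mpr (hper 1)

theorem fib_modEq_pow_wallExp_of_modEq_pisano_general
    (p : ℕ) (hp : p.Prime) (hp2 : p ≠ 2)
    (m n : ℕ) (h : m ≡ n [MOD pisano p]) :
    (Nat.fib m : ZMod (p ^ wallExp p)) = (Nat.fib n : ZMod (p ^ wallExp p)) := by
  rcases (pisano p).eq_zero_or_pos with hP | hP
  -- `pisano p = 0` would mean the defining set is empty; then `h` says `m = n`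
  · rw [hP, Nat.modEq_zero_iff] at h
    rw [h]
  obtain ⟨h0, h1⟩ := fib_pisano_eq_zero_and_fib_succ_eq_one hP
  have hdvd : p ^ wallExp p ∣ fib (pisano p) := pow_dvd_fib_of_pow_dvd_fib hp
    (not_dvd_pSubEps hp) pow_padicValNat_dvd ((ZMod.natCast_eq_zero_iff _ _).mp h0)
  have h0' : (fib (pisano p) : ZMod (p ^ wallExp p)) = 0 :=
    (ZMod.natCast_eq_zero_iff _ _).mpr hdvd
  have : Fact (2 < p) := ⟨lt_of_le_of_ne hp.two_le (Ne.symm hp2)⟩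
  have heven := even_of_fib_eq_zero_of_fib_succ_eq_one ZMod.neg_one_ne_one h0 h1
  have h1' : (fib (pisano p + 1) : ZMod (p ^ wallExp p)) = 1 :=
    natCast_eq_one_of_sq_eq_one hp hp2 h1
      (by rw [fib_succ_sq_of_fib_eq_zero h0', heven.neg_one_pow])
  have hper := (fib_periodic_of_fib_eq_zero_of_fib_succ_eq_one h0' h1').map_mod_nat
  rw [← hper m, ← hper n, h]

theorem fib_modEq_pow_wallExp_of_modEq_pisano
    (p : ℕ) (hp : p.Prime) (hp2 : p ≠ 2) (hp5 : p ≠ 5)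
    (m n : ℕ) (h : m ≡ n [MOD pisano p]) :
    (Nat.fib m : ZMod (p ^ wallExp p)) = (Nat.fib n : ZMod (p ^ wallExp p)) :=
  fib_modEq_pow_wallExp_of_modEq_pisano_general p hp hp2 m n h
end
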